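/- arXiv:1409.5848 — 5 statements merged into one kernel-verified Lean document; each statement's English description precedes it below -/
import Mathlib

section
/- Let μ be a Borel probability measure on a standard Borel space X and let φ be a continuous unitary representation of L^0(μ,T) on a separable complex Hilbert space. Then there exists a finite Borel measure ν on X such that: (i) ν ≪ μ and φ is the composition of the natural homomorphism L^0(μ,T) → L^0(ν,T) with a continuous unitary representation of L^0(ν,T); and (ii) whenever ν' is a finite Borel measure on X with ν' ≪ μ such that φ is the composition of the natural homomorphism L^0(μ,T) → L^0(ν',T) with a continuous unitary representation of L^0(ν',T), then ν ≪ ν'. -/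
/-!
Say that `φ` is supported on a measurable set `A` if `φ` kills every function that is `1` a.e.
on `A`. Supports are closed under finite intersections (if `φ` is supported on `A`, it cannot
tell `f` from the function equal to `f` on `A` and to `1` off `A`) and under decreasing countable
intersections (the kernel of `φ` is closed, and the functions equal to `f` off `Bₙ` and to `1`
on `Bₙ` converge in measure to `f`). Hence a support `A` of minimal `μ`-measure exists, and it is
contained a.e. in every support. Then `ν = μ|_A` works: `φ` factors through `L⁰(μ|_A, 𝕋)` via
extension by `1`, and if `φ` factors through `L⁰(ν', 𝕋)` then the complement of every
`ν'`-null set is a support, so `μ|_A ≪ ν'`.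
-/

open MeasureTheory TopologicalSpace

noncomputable section

/-- The topology of convergence in measure on the space `L⁰(μ, G) = X →ₘ[μ] G` of
`μ`-equivalence classes of measurable functions. -/
instance l0TopologicalSpace {X G : Type*} [MeasurableSpace X] {μ : Measure X} [MetricSpace G] :
    TopologicalSpace (X →ₘ[μ] G) :=
  TopologicalSpace.generateFrom
    { U | ∃ (f : X →ₘ[μ] G) (ε δ : ℝ), 0 < ε ∧ 0 < δ ∧
        U = { g | μ { x | ε ≤ dist (f x) (g x) } < ENNReal.ofReal δ } }

/-- The natural homomorphism `L⁰(μ, 𝕋) → L⁰(ν, 𝕋)` for `ν ≪ μ`: the `ν`-equivalence class of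
a function contains its `μ`-equivalence class. -/
def l0NatMap {X : Type*} [MeasurableSpace X] {μ ν : Measure X} (h : ν ≪ μ)
    (f : X →ₘ[μ] Circle) : X →ₘ[ν] Circle :=
  AEEqFun.mk ⇑f (f.aestronglyMeasurable.mono_ac h)

/-- `φ` is the composition of the natural homomorphism `L⁰(μ, 𝕋) → L⁰(ν, 𝕋)` and a
continuous (i.e. strongly continuous) unitary representation `ψ` of `L⁰(ν, 𝕋)`. -/
def FactorsThroughL0 {X : Type*} [MeasurableSpace X] {μ ν : Measure X}
    {H : Type*} [NormedAddCommGroup H] [InnerProductSpace ℂ H] [CompleteSpace H]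
    (φ : (X →ₘ[μ] Circle) →* unitary (H →L[ℂ] H)) (h : ν ≪ μ) : Prop :=
  ∃ ψ : (X →ₘ[ν] Circle) →* unitary (H →L[ℂ] H),
    (∀ v : H, Continuous fun g : X →ₘ[ν] Circle => (ψ g : H →L[ℂ] H) v) ∧
    ∀ f, φ f = ψ (l0NatMap h f)

open Filter Set
open scoped Topology ENNReal

namespace MeasureTheory

variable {X : Type*} [MeasurableSpace X] {μ : Measure X}

theorem exists_measurableSet_forall_measure_sdiff_eq_zero [IsFiniteMeasure μ]
    {p : Set X → Prop} (hne : ∃ A, MeasurableSet A ∧ p A)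
    (hinter : ∀ A B, MeasurableSet A → MeasurableSet B → p A → p B → p (A ∩ B))
    (hiInter : ∀ B : ℕ → Set X, (∀ n, MeasurableSet (B n)) → Antitone B → (∀ n, p (B n)) →
      p (⋂ n, B n)) :
    ∃ A, MeasurableSet A ∧ p A ∧ ∀ C, MeasurableSet C → p C → μ (A \ C) = 0 := by
  set S : Set ℝ≥0∞ := μ '' {A | MeasurableSet A ∧ p A}
  obtain ⟨u, -, hu, huS⟩ :=
    exists_seq_tendsto_sInf (Set.Nonempty.image _ hne) (OrderBot.bddBelow S)
  choose A hA hμA using huS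
  have hdiss : ∀ n, MeasurableSet (dissipate A n) ∧ p (dissipate A n) := by
    intro n
    induction n with
    | zero => rw [dissipate_zero_nat]; exact hA 0
    | succ n ih =>
      rw [dissipate_succ]
      exact ⟨ih.1.inter (hA _).1, hinter _ _ ih.1 (hA _).1 ih.2 (hA _).2⟩
  have hAinf : MeasurableSet (⋂ n, A n) ∧ p (⋂ n, A n) := by
    rw [← iInter_dissipate]
    exact ⟨.iInter fun n => (hdiss n).1,
      hiInter _ (fun n => (hdiss n).1) antitone_dissipate fun n => (hdiss n).2⟩
  have hle : μ (⋂ n, A n) ≤ sInf S :=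
    ge_of_tendsto' hu fun n => (hμA n).symm ▸ measure_mono (iInter_subset A n)
  refine ⟨⋂ n, A n, hAinf.1, hAinf.2, fun C hC hpC => ?_⟩
  have hinf : μ (⋂ n, A n) ≤ μ ((⋂ n, A n) ∩ C) :=
    hle.trans (sInf_le ⟨_, ⟨hAinf.1.inter hC, hinter _ _ hAinf.1 hC hAinf.2 hpC⟩, rfl⟩)
  rw [← sdiff_self_inter, measure_sdiff inter_subset_left (hAinf.1.inter hC).nullMeasurableSet
    (measure_ne_top μ _)]
  exact tsub_eq_zero_of_le hinf

theorem aestronglyMeasurable_mulIndicator {G : Type*} [TopologicalSpace G] [One G] {A : Set X}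
    (hA : MeasurableSet A) {g : X → G} (hg : AEStronglyMeasurable g (μ.restrict A)) :
    AEStronglyMeasurable (A.mulIndicator g) μ := by
  classical
  rw [← piecewise_eq_mulIndicator]
  exact hg.piecewise hA aestronglyMeasurable_const

theorem mulIndicator_ae_eq_of_ae_eq_restrict {G : Type*} [One G] {A : Set X}
    (hA : MeasurableSet A) {g₁ g₂ : X → G} (h : g₁ =ᵐ[μ.restrict A] g₂) :
    A.mulIndicator g₁ =ᵐ[μ] A.mulIndicator g₂ := by
  filter_upwards [(ae_restrict_iff' hA).1 h] with x hx
  by_cases hxA : x ∈ A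
  · simp [hxA, hx hxA]
  · simp [hxA]

end MeasureTheory

namespace MeasureTheory.AEEqFun

variable {X : Type*} [MeasurableSpace X] {μ : Measure X}

section Topological

variable {G : Type*} [TopologicalSpace G]

def restrict (A : Set X) (f : X →ₘ[μ] G) : X →ₘ[μ.restrict A] G :=
  mk f f.aestronglyMeasurable.restrict

theorem coeFn_restrict (A : Set X) (f : X →ₘ[μ] G) : ⇑(f.restrict A) =ᵐ[μ.restrict A] f :=
  coeFn_mk _ _

variable [Monoid G] [ContinuousMul G] {A : Set X}

def extendOne (hA : MeasurableSet A) : (X →ₘ[μ.restrict A] G) →* (X →ₘ[μ] G) where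
  toFun g := mk (A.mulIndicator g) (aestronglyMeasurable_mulIndicator hA g.aestronglyMeasurable)
  map_one' := by
    conv_rhs => rw [one_def]
    rw [mk_eq_mk]
    exact (mulIndicator_ae_eq_of_ae_eq_restrict hA coeFn_one).trans
      (mulIndicator_one _ _).eventuallyEq
  map_mul' g₁ g₂ := by
    rw [mk_mul_mk, mk_eq_mk]
    exact (mulIndicator_ae_eq_of_ae_eq_restrict hA (coeFn_mul g₁ g₂)).trans
      (mulIndicator_mul _ _ _).eventuallyEq

theorem coeFn_extendOne (hA : MeasurableSet A) (g : X →ₘ[μ.restrict A] G) :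
    ⇑(extendOne hA g) =ᵐ[μ] A.mulIndicator g :=
  coeFn_mk _ _

theorem coeFn_extendOne_restrict (hA : MeasurableSet A) (f : X →ₘ[μ] G) :
    ⇑(extendOne hA (f.restrict A)) =ᵐ[μ] A.mulIndicator f :=
  (coeFn_extendOne hA _).trans (mulIndicator_ae_eq_of_ae_eq_restrict hA (coeFn_restrict A f))

end Topological

section Metric

variable {G : Type*} [MetricSpace G]

theorem tendsto_of_tendsto_measure_ne {ι : Type*} {l : Filter ι} {s : ι → X →ₘ[μ] G}
    {f : X →ₘ[μ] G} (hs : Tendsto (fun i => μ {x | s i x ≠ f x}) l (𝓝 0)) :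
    Tendsto s l (𝓝 f) := by
  refine tendsto_nhds_generateFrom_iff.mpr ?_
  rintro U ⟨f₀, ε, δ, -, -, rfl⟩ hfU
  have hgap : 0 < ENNReal.ofReal δ - μ {x | ε ≤ dist (f₀ x) (f x)} := tsub_pos_of_lt hfU
  filter_upwards [hs.eventually_lt_const hgap] with i hi
  calc μ {x | ε ≤ dist (f₀ x) (s i x)}
      ≤ μ ({x | ε ≤ dist (f₀ x) (f x)} ∪ {x | s i x ≠ f x}) := by
        refine measure_mono fun x hx => ?_
        by_cases hxi : s i x = f x
        · exact Or.inl (by simpa [hxi] using hx)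
        · exact Or.inr hxi
    _ ≤ μ {x | ε ≤ dist (f₀ x) (f x)} + μ {x | s i x ≠ f x} := measure_union_le _ _
    _ < ENNReal.ofReal δ := lt_tsub_iff_left.mp hi

variable [Monoid G] [ContinuousMul G] {A : Set X}

theorem measure_dist_extendOne (hA : MeasurableSet A) (f : X →ₘ[μ] G)
    (g : X →ₘ[μ.restrict A] G) (ε : ℝ) :
    μ {x | ε ≤ dist (f x) (extendOne hA g x)} =
      μ.restrict A {x | ε ≤ dist (f x) (g x)} + μ ({x | ε ≤ dist (f x) 1} \ A) := by
  have hcongr : {x | ε ≤ dist (f x) (extendOne hA g x)} =ᵐ[μ]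
      {x | ε ≤ dist (f x) (A.mulIndicator g x)} := by
    rw [eventuallyEq_set]
    filter_upwards [coeFn_extendOne hA g] with x hx
    rw [hx]
  rw [measure_congr hcongr, ← measure_inter_add_sdiff _ hA, Measure.restrict_apply' hA]
  congr 2 <;> ext x <;> by_cases hxA : x ∈ A <;> simp [hxA]

theorem continuous_extendOne (hA : MeasurableSet A) :
    Continuous (extendOne (μ := μ) (G := G) hA) := by
  refine continuous_generateFrom_iff.mpr ?_
  rintro U ⟨f, ε, δ, hε, -, rfl⟩
  set c := μ ({x | ε ≤ dist (f x) 1} \ A)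
  have hpre : extendOne (μ := μ) hA ⁻¹' {g | μ {x | ε ≤ dist (f x) (g x)} < ENNReal.ofReal δ} =
      {g | μ.restrict A {x | ε ≤ dist (f.restrict A x) (g x)} < ENNReal.ofReal δ - c} := by
    ext g
    have hf : {x | ε ≤ dist (f.restrict A x) (g x)} =ᵐ[μ.restrict A]
        {x | ε ≤ dist (f x) (g x)} := by
      rw [eventuallyEq_set]
      filter_upwards [coeFn_restrict A f] with x hx
      rw [hx]
    rw [mem_preimage, mem_ofPred, mem_ofPred, measure_dist_extendOne, measure_congr hf,
      lt_tsub_iff_right]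
  rw [hpre]
  rcases le_or_gt (ENNReal.ofReal δ) c with hc | hc
  · simp [tsub_eq_zero_of_le hc]
  · have hne : ENNReal.ofReal δ - c ≠ ∞ := ENNReal.sub_ne_top ENNReal.ofReal_ne_top
    rw [← ENNReal.ofReal_toReal hne]
    exact isOpen_generateFrom_of_mem ⟨f.restrict A, ε, _, hε,
      ENNReal.toReal_pos (tsub_pos_of_lt hc).ne' hne, rfl⟩

end Metric

end MeasureTheory.AEEqFun

namespace MeasureTheory

open AEEqFun

section SupportedOn

variable {X G M : Type*} [MeasurableSpace X] {μ : Measure X} [TopologicalSpace G] [Group G]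
  [IsTopologicalGroup G] [Group M]

def IsSupportedOn (φ : (X →ₘ[μ] G) →* M) (A : Set X) : Prop :=
  ∀ f : X →ₘ[μ] G, (∀ᵐ x ∂μ.restrict A, f x = 1) → φ f = 1

variable {φ : (X →ₘ[μ] G) →* M} {A B : Set X}

theorem isSupportedOn_univ (φ : (X →ₘ[μ] G) →* M) : IsSupportedOn φ univ := by
  intro f hf
  rw [Measure.restrict_univ] at hf
  rw [show f = 1 from AEEqFun.ext ((show ⇑f =ᵐ[μ] 1 from hf).trans coeFn_one.symm), map_one]

theorem IsSupportedOn.map_eq (hφA : IsSupportedOn φ A) {f g : X →ₘ[μ] G}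
    (hfg : ⇑f =ᵐ[μ.restrict A] ⇑g) : φ f = φ g := by
  rw [← mul_inv_eq_one, ← map_inv, ← map_mul]
  refine hφA _ ?_
  filter_upwards [(coeFn_mul f g⁻¹).restrict, (coeFn_inv g).restrict, hfg] with x hmul hinv hx
  rw [hmul, Pi.mul_apply, hinv, Pi.inv_apply, hx, mul_inv_cancel]

theorem IsSupportedOn.inter (hA : MeasurableSet A) (hB : MeasurableSet B)
    (hφA : IsSupportedOn φ A) (hφB : IsSupportedOn φ B) : IsSupportedOn φ (A ∩ B) := by
  intro f hf
  have hfA : ⇑f =ᵐ[μ.restrict A] ⇑(extendOne hA (f.restrict A)) := by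
    filter_upwards [(coeFn_extendOne_restrict hA f).restrict, ae_restrict_mem hA] with x hx hxA
    rw [hx, mulIndicator_of_mem hxA]
  rw [hφA.map_eq hfA]
  refine hφB _ ?_
  filter_upwards [(coeFn_extendOne_restrict hA f).restrict,
    ae_restrict_of_ae ((ae_restrict_iff' (hA.inter hB)).1 hf), ae_restrict_mem hB]
    with x hx hfx hxB
  rw [hx]
  by_cases hxA : x ∈ A
  · rw [mulIndicator_of_mem hxA, hfx ⟨hxA, hxB⟩]
  · rw [mulIndicator_of_notMem hxA]

end SupportedOn

theorem IsSupportedOn.iInter {X G M : Type*} [MeasurableSpace X] {μ : Measure X}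
    [IsFiniteMeasure μ] [MetricSpace G] [Group G] [IsTopologicalGroup G] [Group M]
    {φ : (X →ₘ[μ] G) →* M} (hker : IsClosed (φ.ker : Set (X →ₘ[μ] G))) {B : ℕ → Set X}
    (hB : ∀ n, MeasurableSet (B n)) (hanti : Antitone B) (hφB : ∀ n, IsSupportedOn φ (B n)) :
    IsSupportedOn φ (⋂ n, B n) := by
  intro f hf
  set s : ℕ → X →ₘ[μ] G := fun n => extendOne (hB n).compl (f.restrict (B n)ᶜ)
  have hs_coe : ∀ n, ⇑(s n) =ᵐ[μ] (B n)ᶜ.mulIndicator f :=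
    fun n => coeFn_extendOne_restrict (hB n).compl f
  have hs_ker : ∀ n, s n ∈ φ.ker := fun n => hφB n _ <| by
    filter_upwards [(hs_coe n).restrict, ae_restrict_mem (hB n)] with x hx hxB
    rw [hx, mulIndicator_of_notMem (not_not_intro hxB)]
  have hdiff : Tendsto (fun n => μ (B n \ ⋂ m, B m)) atTop (𝓝 0) := by
    have h := tendsto_measure_iInter_atTop
      (fun n => ((hB n).diff (.iInter hB)).nullMeasurableSet)
      (fun m n hmn => sdiff_subset_sdiff_left (hanti hmn)) ⟨0, measure_ne_top μ _⟩
    rwa [show ⋂ n, (B n \ ⋂ m, B m) = ∅ from eq_empty_iff_forall_notMem.2 fun x hx =>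
      (mem_iInter.1 hx 0).2 (mem_iInter.2 fun m => (mem_iInter.1 hx m).1), measure_empty] at h
  have hs : Tendsto s atTop (𝓝 f) := by
    refine tendsto_of_tendsto_measure_ne (tendsto_of_tendsto_of_tendsto_of_le_of_le
      tendsto_const_nhds hdiff (fun _ => zero_le) fun n => measure_mono_ae ?_)
    filter_upwards [hs_coe n, (ae_restrict_iff' (.iInter hB)).1 hf] with x hx hfx hne
    change s n x ≠ f x at hne
    rw [hx] at hne
    by_cases hxB : x ∈ B n
    · rw [mulIndicator_of_notMem (not_not_intro hxB)] at hne
      exact ⟨hxB, fun hxA => hne (hfx hxA).symm⟩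
    · exact absurd (mulIndicator_of_mem hxB f) hne
  exact hker.mem_of_tendsto hs (Eventually.of_forall hs_ker)

end MeasureTheory

section UnitaryRepresentation

variable {H : Type*} [NormedAddCommGroup H] [InnerProductSpace ℂ H] [CompleteSpace H]

theorem MonoidHom.isClosed_ker_of_continuous_apply {T : Type*} [TopologicalSpace T] [Group T]
    {φ : T →* unitary (H →L[ℂ] H)} (hφ : ∀ v : H, Continuous fun f => (φ f : H →L[ℂ] H) v) :
    IsClosed (φ.ker : Set T) := by
  have hker : (φ.ker : Set T) = ⋂ v, {f | (φ f : H →L[ℂ] H) v = v} := by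
    ext f
    simp only [SetLike.mem_coe, MonoidHom.mem_ker, mem_iInter, mem_ofPred_eq]
    rw [Subtype.ext_iff, ContinuousLinearMap.ext_iff]
    rfl
  rw [hker]
  exact isClosed_iInter fun v => isClosed_eq (hφ v) continuous_const

variable {X : Type*} [MeasurableSpace X] {μ : Measure X}
  {φ : (X →ₘ[μ] Circle) →* unitary (H →L[ℂ] H)} {A : Set X}

theorem MeasureTheory.IsSupportedOn.factorsThroughL0
    (hφ : ∀ v : H, Continuous fun f : X →ₘ[μ] Circle => (φ f : H →L[ℂ] H) v)
    (hA : MeasurableSet A) (hφA : IsSupportedOn φ A) :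
    FactorsThroughL0 φ (Measure.restrict_le_self.absolutelyContinuous : μ.restrict A ≪ μ) := by
  refine ⟨φ.comp (AEEqFun.extendOne hA), fun v => (hφ v).comp (AEEqFun.continuous_extendOne hA),
    fun f => hφA.map_eq ?_⟩
  filter_upwards [(AEEqFun.coeFn_extendOne_restrict hA f).restrict, ae_restrict_mem hA]
    with x hx hxA
  change f x = AEEqFun.extendOne hA (f.restrict A) x
  rw [hx, mulIndicator_of_mem hxA]

theorem FactorsThroughL0.isSupportedOn {ν : Measure X} {hν : ν ≪ μ}
    (hφν : FactorsThroughL0 φ hν) (hA : MeasurableSet A) (hνA : ν Aᶜ = 0) :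
    IsSupportedOn φ A := by
  obtain ⟨ψ, -, hψ⟩ := hφν
  intro f hf
  have hf_one : l0NatMap hν f = 1 := by
    refine AEEqFun.ext ?_
    filter_upwards [AEEqFun.coeFn_mk (μ := ν) (⇑f) _, hν.ae_le ((ae_restrict_iff' hA).1 hf),
      mem_ae_iff.2 hνA, AEEqFun.coeFn_one (β := Circle) (μ := ν)] with x hx hfx hxA hone
    rw [l0NatMap, hx, hone, hfx hxA, Pi.one_apply]
  rw [hψ, hf_one, map_one]

end UnitaryRepresentation

theorem statement2_general
    {X : Type*} [mX : MeasurableSpace X]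
    (μ : Measure X) [IsProbabilityMeasure μ]
    {H : Type*} [NormedAddCommGroup H] [InnerProductSpace ℂ H] [CompleteSpace H]
    -- `φ` is a strongly continuous unitary representation of `L⁰(μ, 𝕋)` on `H`
    (φ : (X →ₘ[μ] Circle) →* unitary (H →L[ℂ] H))
    (hφ : ∀ v : H, Continuous fun f : X →ₘ[μ] Circle => (φ f : H →L[ℂ] H) v) :
    ∃ (ν : Measure X) (hν : ν ≪ μ), IsFiniteMeasure ν ∧
      -- (i) `φ` factors through the natural homomorphism `L⁰(μ, 𝕋) → L⁰(ν, 𝕋)`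
      FactorsThroughL0 φ hν ∧
      -- (ii) `ν` is smallest with this property with respect to absolute continuity
      ∀ (ν' : Measure X) (hν' : ν' ≪ μ), IsFiniteMeasure ν' →
        FactorsThroughL0 φ hν' → ν ≪ ν' := by
  obtain ⟨A, hA, hφA, hA_min⟩ :=
    exists_measurableSet_forall_measure_sdiff_eq_zero (μ := μ) (p := IsSupportedOn φ)
    ⟨univ, .univ, isSupportedOn_univ φ⟩ (fun _ _ hA hB hφA hφB => hφA.inter hA hB hφB)
    (fun _ hB hanti hφB => .iInter (MonoidHom.isClosed_ker_of_continuous_apply hφ) hB hanti hφB)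
  refine ⟨μ.restrict A, _, inferInstance, hφA.factorsThroughL0 hφ hA,
    fun ν' hν' _ hφν' => Measure.AbsolutelyContinuous.mk fun t ht hν't => ?_⟩
  have hAt : μ (A \ tᶜ) = 0 :=
    hA_min tᶜ ht.compl (hφν'.isSupportedOn ht.compl (by rwa [compl_compl]))
  rw [Measure.restrict_apply ht]
  refine measure_mono_null ?_ hAt
  exact fun x hx => ⟨hx.2, not_not_intro hx.1⟩

/-- **Corollary 2.2** (Solecki): for every continuous unitary representation `φ` of
`L⁰(μ, 𝕋)` on a separable complex Hilbert space there is a smallest (with respect to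
absolute continuity) finite Borel measure `ν ≪ μ` such that `φ` factors through the natural
homomorphism `L⁰(μ, 𝕋) → L⁰(ν, 𝕋)`. -/
theorem statement2
    {X : Type*} [mX : MeasurableSpace X] [StandardBorelSpace X]
    (μ : Measure X) [IsProbabilityMeasure μ]
    {H : Type*} [NormedAddCommGroup H] [InnerProductSpace ℂ H] [CompleteSpace H]
    [SeparableSpace H]
    -- `φ` is a strongly continuous unitary representation of `L⁰(μ, 𝕋)` on `H`
    (φ : (X →ₘ[μ] Circle) →* unitary (H →L[ℂ] H))
    (hφ : ∀ v : H, Continuous fun f : X →ₘ[μ] Circle => (φ f : H →L[ℂ] H) v) :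
    ∃ (ν : Measure X) (hν : ν ≪ μ), IsFiniteMeasure ν ∧
      -- (i) `φ` factors through the natural homomorphism `L⁰(μ, 𝕋) → L⁰(ν, 𝕋)`
      FactorsThroughL0 φ hν ∧
      -- (ii) `ν` is smallest with this property with respect to absolute continuity
      ∀ (ν' : Measure X) (hν' : ν' ≪ μ), IsFiniteMeasure ν' →
        FactorsThroughL0 φ hν' → ν ≪ ν' :=
  statement2_general (mX := mX) μ φ hφ

end
end

section
/- Let κ = (k_1,...,k_m) and κ' = (l_1,...,l_n) be finite nondecreasing sequences of nonzero integers, let q ∈ ℕ, and let u : {1,...,m} → {1,...,q} and v : {1,...,n} → {1,...,q} be injective maps. Assume that for all z_1,...,z_q in the circle group T, z_{u(1)}^{k_1}···z_{u(m)}^{k_m} = z_{v(1)}^{l_1}···z_{v(n)}^{l_n}. Then m = n, for each integer r the sets {u(i) : k_i = r} and {v(i) : l_i = r} are equal, and hence κ = κ'. If moreover for all i < j ≤ m one has (k_i = k_j ⟹ u(i) < u(j)) and (l_i = l_j ⟹ v(i) < v(j)), then u = v. -/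
/-!
Let `E = extend u k 0 : Fin q → ℤ` record the exponent with which each variable occurs in the
monomial. Evaluating the identity at `z = Pi.mulSingle p w` gives `w ^ E p = w ^ E' p` for every
`w ∈ 𝕋`, and since `𝕋` has exponent zero, `E = E'`. As `u` is injective and `k` nonzero, the
nonzero values of `E` are exactly the `k i`, each taken once at `u i`: so the fibres of `E` are
the sets `u '' {k = r}`, and the multiset of values of `k` is read off from `E`, which pins down
the nondecreasing `k`. Finally `u` and `v` are strictly monotone on each block `{k = r}` with the
same image, so they agree there.
-/

open Finset Function

lemma Circle.exponent_eq_zero : Monoid.exponent Circle = 0 := by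
  refine Monoid.exponent_eq_zero_iff_forall.2 fun n hn => ⟨Circle.exp (Real.pi / n), ?_⟩
  rw [← Circle.exp_natCast_mul, mul_div_cancel₀ _ (by positivity)]
  exact Circle.exp_pi_ne_one

lemma eq_of_forall_zpow_eq_zpow {G : Type*} [Group G] (hG : Monoid.exponent G = 0) {a b : ℤ}
    (h : ∀ g : G, g ^ a = g ^ b) : a = b := by
  simpa [hG, sub_eq_zero] using Group.exponent_dvd_sub_iff_zpow_eq_zpow.2 h

section Extend

variable {ι κ : Type*} {u : ι → κ}

lemma prod_mulSingle_zpow {G : Type*} [Fintype ι] [DecidableEq κ] [CommGroup G]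
    (hu : Injective u) (k : ι → ℤ) (p : κ) (w : G) :
    ∏ i, (Pi.mulSingle p w : κ → G) (u i) ^ k i = w ^ extend u k 0 p := by
  by_cases hp : ∃ i, u i = p
  · obtain ⟨i, rfl⟩ := hp
    rw [hu.extend_apply, Fintype.prod_eq_single i fun j hj => by simp [hu.ne hj]]
    simp
  · rw [extend_apply' _ _ _ hp, Pi.zero_apply, zpow_zero]
    exact Fintype.prod_eq_one _ fun i => by
      rw [Pi.mulSingle_eq_of_ne fun h => hp ⟨i, h⟩, one_zpow]

lemma extend_eq_of_forall_prod_zpow_eq {ι' G : Type*} [Fintype ι] [Fintype ι'] [CommGroup G]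
    (hG : Monoid.exponent G = 0) {v : ι' → κ} (hu : Injective u) (hv : Injective v)
    {k : ι → ℤ} {l : ι' → ℤ} (h : ∀ z : κ → G, ∏ i, z (u i) ^ k i = ∏ j, z (v j) ^ l j) :
    extend u k 0 = extend v l 0 := by
  classical
  funext p
  refine eq_of_forall_zpow_eq_zpow hG fun w => ?_
  rw [← prod_mulSingle_zpow hu, ← prod_mulSingle_zpow hv]
  exact h (Pi.mulSingle p w)

lemma image_setOf_eq_setOf_extend (hu : Injective u) (k : ι → ℤ) {r : ℤ} (hr : r ≠ 0) :
    u '' {i | k i = r} = {p | extend u k 0 p = r} := by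
  ext p
  constructor
  · rintro ⟨i, rfl, rfl⟩
    exact hu.extend_apply k 0 i
  · intro hp
    by_cases h : ∃ i, u i = p
    · obtain ⟨i, rfl⟩ := h
      exact ⟨i, (hu.extend_apply k 0 i).symm.trans hp, rfl⟩
    · rw [Set.mem_ofPred_eq, extend_apply' _ _ _ h] at hp
      exact absurd hp.symm hr

lemma support_extend (hu : Injective u) {k : ι → ℤ} (hk : ∀ i, k i ≠ 0) :
    support (extend u k 0) = Set.range u := by
  ext p
  by_cases h : ∃ i, u i = p
  · obtain ⟨i, rfl⟩ := h
    simp [hu.extend_apply, hk]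
  · simp [h]

lemma map_univ_val_eq_map_extend [Fintype ι] [Fintype κ] [DecidableEq κ] (hu : Injective u)
    {k : ι → ℤ} (hk : ∀ i, k i ≠ 0) :
    univ.val.map k = (univ.filter fun p => extend u k 0 p ≠ 0).val.map (extend u k 0) := by
  have : univ.filter (fun p => extend u k 0 p ≠ 0) = univ.map ⟨u, hu⟩ := by
    ext p
    simpa using congrArg (p ∈ ·) (support_extend hu hk)
  rw [this, Finset.map_val, Multiset.map_map]
  congr 1
  funext i
  exact (hu.extend_apply k 0 i).symm

end Extend

lemma StrictMonoOn.eqOn_of_image_eq {α β : Type*} [LinearOrder α] [WellFoundedLT α]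
    [Preorder β] {s : Set α} {f g : α → β} (hf : StrictMonoOn f s) (hg : StrictMonoOn g s)
    (h : f '' s = g '' s) : s.EqOn f g := by
  have := (hf.domRestrict.range_inj hg.domRestrict).1 (by simpa using h)
  exact fun x hx => congrFun this ⟨x, hx⟩

/-- **The Observation** in the proof of uniqueness in Theorem 2.1 (Solecki): if two monomials
in variables `z_1, …, z_q ∈ 𝕋` with nondecreasing nonzero integer exponents `k` and `l`, and
with injectively chosen variables, agree for all values of the variables, then the exponent
sequences are equal, and for each integer `r` the sets of variables appearing with exponent
`r` coincide; if moreover the choices of variables are increasing on constancy blocks of the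
exponents, then the choices coincide. -/
theorem statement12
    (m n q : ℕ) (k : Fin m → ℤ) (l : Fin n → ℤ)
    (hkmono : Monotone k) (hlmono : Monotone l)
    (hk0 : ∀ i, k i ≠ 0) (hl0 : ∀ i, l i ≠ 0)
    (u : Fin m → Fin q) (v : Fin n → Fin q)
    (hu : Function.Injective u) (hv : Function.Injective v)
    (heq : ∀ z : Fin q → Circle, ∏ i, z (u i) ^ k i = ∏ i, z (v i) ^ l i) :
    ∃ h : m = n,
      -- for each integer `r`, `{u i : k i = r} = {v i : l i = r}`
      (∀ r : ℤ, u '' { i | k i = r } = v '' { i | l i = r }) ∧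
      -- hence `κ = κ'`
      (∀ i : Fin m, k i = l (Fin.cast h i)) ∧
      -- under the additional monotonicity assumptions, `u = v`
      ((∀ i j : Fin m, i < j → k i = k j → u i < u j) →
        (∀ i j : Fin n, i < j → l i = l j → v i < v j) →
        ∀ i : Fin m, u i = v (Fin.cast h i)) := by
  have hext := extend_eq_of_forall_prod_zpow_eq Circle.exponent_eq_zero hu hv heq
  have hfib : ∀ r : ℤ, u '' {i | k i = r} = v '' {i | l i = r} := by
    intro r
    rcases eq_or_ne r 0 with rfl | hr
    · simp [hk0, hl0]
    · rw [image_setOf_eq_setOf_extend hu k hr, image_setOf_eq_setOf_extend hv l hr, hext]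
  have hperm : (List.ofFn k).Perm (List.ofFn l) := by
    rw [← Multiset.coe_eq_coe, ← Fin.univ_val_map, ← Fin.univ_val_map,
      map_univ_val_eq_map_extend hu hk0, map_univ_val_eq_map_extend hv hl0, hext]
  have hkl := hperm.eq_of_sortedLE hkmono.sortedLE_ofFn hlmono.sortedLE_ofFn
  obtain rfl : m = n := by simpa using congrArg List.length hkl
  obtain rfl : k = l := List.ofFn_inj.mp hkl
  refine ⟨rfl, hfib, fun _ => rfl, fun hku hlv i => ?_⟩
  have hblock (w : Fin m → Fin q) (hw : ∀ i j, i < j → k i = k j → w i < w j) :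
      StrictMonoOn w {j | k j = k i} := fun a ha b hb hab => hw a b hab (ha.trans hb.symm)
  exact (hblock u hku).eqOn_of_image_eq (hblock v hlv) (hfib (k i)) rfl
end

section
/- Let i ≥ 1 and let ν_1, ν_2, ..., ν_{i-1} be finite Borel measures on a standard Borel space with ν_{i-1} ≪ ··· ≪ ν_2 ≪ ν_1, and let μ be another finite Borel measure on the same space. Then μ can be written as μ = μ_1 + ··· + μ_i, where μ_j ≪ ν_{j-1} for 2 ≤ j ≤ i, μ_j ⊥ ν_j for 1 ≤ j ≤ i−1, and μ_j ⊥ μ_{j'} for 1 ≤ j, j' ≤ i with j ≠ j'. -/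
open MeasureTheory

/-- The remainder measures in the iterated Lebesgue decomposition: `restM ν μ 1 = μ` and
`restM ν μ (n+1)` is the part of `restM ν μ n` absolutely continuous w.r.t. `ν n`. -/
noncomputable def restM {α : Type*} [MeasurableSpace α] (ν : ℕ → Measure α) (μ : Measure α) :
    ℕ → Measure α
  | 0 => μ
  | 1 => μ
  | (n+2) => (ν (n+1)).withDensity ((restM ν μ (n+1)).rnDeriv (ν (n+1)))

theorem restM_le {α : Type*} [MeasurableSpace α] (ν : ℕ → Measure α) (μ : Measure α) :
    ∀ n, restM ν μ n ≤ μ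
  | 0 => le_refl _
  | 1 => le_refl _
  | (n+2) => le_trans (Measure.withDensity_rnDeriv_le _ _) (restM_le ν μ (n+1))

/-- The general observation in Step 3 of the proof of Theorem 2.1 (Solecki): given finite
Borel measures `ν_{i-1} ≪ ⋯ ≪ ν_2 ≪ ν_1` on a standard Borel space and another finite Borel
measure `μ`, one can decompose `μ = μ_1 + ⋯ + μ_i` with `μ_j ≪ ν_{j-1}` for `2 ≤ j ≤ i`,
`μ_j ⊥ ν_j` for `1 ≤ j ≤ i - 1`, and the `μ_j` pairwise mutually singular. -/
theorem statement13
    {α : Type*} [MeasurableSpace α] [StandardBorelSpace α]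
    (i : ℕ) (hi : 1 ≤ i)
    (ν : ℕ → Measure α)
    (hνfin : ∀ j, 1 ≤ j → j ≤ i - 1 → IsFiniteMeasure (ν j))
    -- `ν_{i-1} ≪ ⋯ ≪ ν_2 ≪ ν_1`
    (hchain : ∀ j, 2 ≤ j → j ≤ i - 1 → ν j ≪ ν (j - 1))
    (μ : Measure α) [IsFiniteMeasure μ] :
    ∃ μpart : ℕ → Measure α,
      -- `μ = μ_1 + ⋯ + μ_i`
      μ = ∑ j ∈ Finset.Icc 1 i, μpart j ∧
      -- `μ_j ≪ ν_{j-1}` for `2 ≤ j ≤ i`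
      (∀ j, 2 ≤ j → j ≤ i → μpart j ≪ ν (j - 1)) ∧
      -- `μ_j ⊥ ν_j` for `1 ≤ j ≤ i - 1`
      (∀ j, 1 ≤ j → j ≤ i - 1 → (μpart j).MutuallySingular (ν j)) ∧
      -- `μ_j ⊥ μ_{j'}` for `j ≠ j'`
      (∀ j j', 1 ≤ j → j ≤ i → 1 ≤ j' → j' ≤ i → j ≠ j' →
        (μpart j).MutuallySingular (μpart j')) := by
  classical
  set r : ℕ → Measure α := restM ν μ with hr
  have hrfin : ∀ n, IsFiniteMeasure (r n) := fun n =>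
    isFiniteMeasure_of_le μ (restM_le ν μ n)
  set μpart : ℕ → Measure α := fun j => if j = i then r i else (r j).singularPart (ν j)
    with hμpart
  -- chain transitivity: for 1 ≤ j ≤ k ≤ i-1, ν k ≪ ν j
  have hchain' : ∀ j k, 1 ≤ j → j ≤ k → k ≤ i - 1 → ν k ≪ ν j := by
    intro j k hj hjk hk
    induction k with
    | zero => omega
    | succ n ih =>
      rcases Nat.eq_or_lt_of_le hjk with h | h
      · exact h ▸ Measure.AbsolutelyContinuous.refl _
      · have h1 : ν (n+1) ≪ ν n := by
          have := hchain (n+1) (by omega) hk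
          simpa using this
        exact h1.trans (ih (by omega) (by omega))
  -- the Lebesgue decomposition step
  have hdecomp : ∀ n, 1 ≤ n → n ≤ i - 1 →
      r n = (r n).singularPart (ν n) + r (n+1) := by
    intro n hn1 hn2
    haveI := hrfin n
    haveI := hνfin n hn1 hn2
    have h2 : r (n+1) = (ν n).withDensity ((r n).rnDeriv (ν n)) := by
      obtain ⟨m, rfl⟩ : ∃ m, n = m + 1 := ⟨n - 1, by omega⟩
      rfl
    rw [h2]
    exact ((r n).haveLebesgueDecomposition_add (ν n))
  -- r n ≪ ν (n-1) for n ≥ 2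
  have hrac : ∀ n, 2 ≤ n → r n ≪ ν (n - 1) := by
    intro n hn
    obtain ⟨m, rfl⟩ : ∃ m, n = m + 2 := ⟨n - 2, by omega⟩
    have : r (m+2) = (ν (m+1)).withDensity ((r (m+1)).rnDeriv (ν (m+1))) := rfl
    rw [this]
    simpa using withDensity_absolutelyContinuous (ν (m+1)) _
  -- μpart j ≤ r j
  have hple : ∀ j, μpart j ≤ r j := by
    intro j
    by_cases h : j = i
    · simp [hμpart, h]
    · simp only [hμpart, if_neg h]
      exact Measure.singularPart_le _ _
  -- key: the partial sums
  have hsum : ∀ k, k ≤ i - 1 → μ = (∑ j ∈ Finset.Icc 1 k, μpart j) + r (k+1) := by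
    intro k hk
    induction k with
    | zero => simp [hr, restM]
    | succ n ih =>
      have h1 := ih (by omega)
      have h2 : r (n+1) = (r (n+1)).singularPart (ν (n+1)) + r (n+2) :=
        hdecomp (n+1) (by omega) hk
      have h3 : μpart (n+1) = (r (n+1)).singularPart (ν (n+1)) := by
        have : n + 1 ≠ i := by omega
        simp [hμpart, this]
      rw [Finset.sum_Icc_succ_top (by omega : 1 ≤ n + 1)]
      rw [h1, h2, h3]
      abel
  refine ⟨μpart, ?_, ?_, ?_, ?_⟩
  · -- total sum
    have h1 := hsum (i - 1) le_rfl
    have h2 : i - 1 + 1 = i := by omega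
    rw [h2] at h1
    rw [show (Finset.Icc 1 i) = Finset.Icc 1 ((i-1)+1) by rw [h2],
      Finset.sum_Icc_succ_top (by omega : 1 ≤ i - 1 + 1)]
    rw [h2]
    have : μpart i = r i := by simp [hμpart]
    rw [this]
    exact h1
  · -- absolute continuity
    intro j hj2 hji
    exact (Measure.absolutelyContinuous_of_le (hple j)).trans (hrac j hj2)
  · -- singularity w.r.t. ν j
    intro j hj1 hj2
    have hji : j ≠ i := by omega
    haveI := hrfin j
    haveI := hνfin j hj1 hj2
    simp only [hμpart, if_neg hji]
    exact Measure.mutuallySingular_singularPart _ _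
  · -- pairwise singularity
    have key : ∀ j j', 1 ≤ j → j < j' → j' ≤ i →
        (μpart j).MutuallySingular (μpart j') := by
      intro j j' hj1 hjj' hj'i
      have hji1 : j ≤ i - 1 := by omega
      haveI := hrfin j
      haveI := hνfin j hj1 hji1
      have hsing : (μpart j).MutuallySingular (ν j) := by
        have hji : j ≠ i := by omega
        simp only [hμpart, if_neg hji]
        exact Measure.mutuallySingular_singularPart _ _
      have hac : μpart j' ≪ ν j := by
        have h1 : μpart j' ≪ ν (j' - 1) :=
          (Measure.absolutelyContinuous_of_le (hple j')).trans
            (hrac j' (by omega))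
        exact h1.trans (hchain' j (j' - 1) hj1 (by omega) (by omega))
      exact hsing.mono_ac (Measure.AbsolutelyContinuous.refl _) hac
    intro j j' hj1 hji hj'1 hj'i hne
    rcases lt_or_gt_of_ne hne with h | h
    · exact key j j' hj1 h hj'i
    · exact (key j' j hj'1 h hji).symm
end

section
/- Let M be a compact, second countable, zero-dimensional space. Then for every continuous function f : M → T there exists a continuous function g : M → ℝ with |g(x)| < 2/3 for all x ∈ M such that f(x) = exp(2πi·g(x)) for all x ∈ M. In particular, the exponential homomorphism C(M,ℝ) → C(M,T), g ↦ exp(2πi·g), is surjective. -/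
/-!
Since `M` is compact and has a basis of clopen sets, every open cover of `M` is refined by a
finite clopen partition, so `f` is uniformly approximated by a locally constant `c : M → 𝕋`,
say with `|f - c| < 1`. Then `f / c` takes values in the arc `|arg| < π/3`, where `arg` is
continuous, while `arg ∘ c` is continuous because it is locally constant. So `g = (arg c + arg (f / c)) / 2π` is a continuous logarithm of `f`, and
`|g| < (π + π/3) / 2π = 2/3`.
-/

noncomputable section

/-- The exponential homomorphism `C(M, ℝ) → C(M, 𝕋)`, `g ↦ exp(2πi·g)`. -/
def cExp {M : Type*} [TopologicalSpace M] (g : C(M, ℝ)) : C(M, Circle) :=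
  ⟨fun x => Circle.exp (2 * Real.pi * g x), by continuity⟩

open Complex Real Set TopologicalSpace

theorem DiscreteQuotient.exists_fiber_subset_of_isOpen_cover {X ι : Type*} [TopologicalSpace X]
    [CompactSpace X] (hX : IsTopologicalBasis {s : Set X | IsClopen s}) {U : ι → Set X}
    (hU : ∀ i, IsOpen (U i)) (hcover : ∀ x, ∃ i, x ∈ U i) :
    ∃ S : DiscreteQuotient X, ∀ q : S, ∃ i, S.proj ⁻¹' {q} ⊆ U i := by
  choose i hi using hcover
  choose V hV hxV hVU using fun x => hX.exists_subset_of_mem_open (hi x) (hU (i x))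
  obtain ⟨t, ht⟩ := isCompact_univ.elim_finite_subcover V (fun x => (hV x).isOpen)
    fun x _ => mem_iUnion.2 ⟨x, hxV x⟩
  let S := t.inf fun x => ofIsClopen (hV x)
  refine ⟨S, fun q => ?_⟩
  obtain ⟨y, rfl⟩ := S.proj_surjective q
  obtain ⟨x, hxt, hyx⟩ : ∃ x ∈ t, y ∈ V x := by simpa using ht (mem_univ y)
  refine ⟨i x, fun z hz => hVU x ?_⟩
  have hle : S ≤ ofIsClopen (hV x) := Finset.inf_le hxt
  have hzy : (ofIsClopen (hV x)).proj z = (ofIsClopen (hV x)).proj y := by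
    rw [← ofLE_proj hle, ← ofLE_proj hle, show S.proj z = S.proj y from hz]
  exact (Quotient.exact hzy).2 hyx

theorem IsLocallyConstant.exists_forall_dist_lt {X Y : Type*} [TopologicalSpace X]
    [CompactSpace X] [PseudoMetricSpace Y] (hX : IsTopologicalBasis {s : Set X | IsClopen s})
    {f : X → Y} (hf : Continuous f) {ε : ℝ} (hε : 0 < ε) :
    ∃ c : X → Y, IsLocallyConstant c ∧ ∀ x, dist (f x) (c x) < ε := by
  obtain ⟨S, hS⟩ := DiscreteQuotient.exists_fiber_subset_of_isOpen_cover hX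
    (U := fun y => f ⁻¹' Metric.ball (f y) ε) (fun y => Metric.isOpen_ball.preimage hf)
    fun x => ⟨x, Metric.mem_ball_self hε⟩
  choose r hr using hS
  exact ⟨f ∘ r ∘ S.proj, S.proj_isLocallyConstant.comp (f ∘ r), fun x => hr (S.proj x) rfl⟩

theorem Circle.abs_arg_lt_pi_div_three {u : Circle} (hu : dist (u : ℂ) 1 < 1) :
    |arg u| < π / 3 := by
  have hre : 1 / 2 < (u : ℂ).re := by
    have h1 : normSq ((u : ℂ) - 1) < 1 := by
      rw [normSq_eq_norm_sq, ← dist_eq_norm]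
      nlinarith [dist_nonneg (x := (u : ℂ)) (y := 1)]
    have h2 : normSq (u : ℂ) = 1 := by rw [normSq_eq_norm_sq, Circle.norm_coe, one_pow]
    simp only [normSq_apply, sub_re, sub_im, one_re, one_im] at h1 h2
    nlinarith
  have hcos : Real.cos (π / 3) < Real.cos |arg u| := by
    rwa [Real.cos_abs, cos_arg u.coe_ne_zero, Circle.norm_coe, div_one, Real.cos_pi_div_three]
  by_contra! h
  exact hcos.not_ge <| Real.cos_le_cos_of_nonneg_of_le_pi (by positivity) (abs_arg_le_pi _) h

theorem Circle.dist_coe_div_one (z w : Circle) : dist ((z / w : Circle) : ℂ) 1 = dist z w := by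
  rw [coe_div, dist_eq_norm, div_sub_one w.coe_ne_zero, norm_div, Circle.norm_coe, div_one,
    ← dist_eq_norm]
  rfl

theorem ContinuousMap.exists_abs_lt_two_div_three_and_eq_circleExp {M : Type*}
    [TopologicalSpace M] [CompactSpace M] (hM : IsTopologicalBasis {s : Set M | IsClopen s})
    (f : C(M, Circle)) :
    ∃ g : C(M, ℝ), (∀ x, |g x| < 2 / 3) ∧ ∀ x, f x = Circle.exp (2 * π * g x) := by
  obtain ⟨c, hc, hfc⟩ := IsLocallyConstant.exists_forall_dist_lt hM f.continuous one_pos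
  have hdist (x : M) : dist ((f x / c x : Circle) : ℂ) 1 < 1 :=
    (Circle.dist_coe_div_one _ _).trans_lt (hfc x)
  have hcont : Continuous fun x => arg (c x) + arg (f x / c x : Circle) := by
    refine (hc.comp (arg ∘ (↑))).continuous.add <| continuousOn_arg.comp_continuous ?_
      fun x => ball_one_subset_slitPlane (hdist x)
    exact continuous_subtype_val.comp (f.continuous.div' hc.continuous)
  refine ⟨⟨fun x => (arg (c x) + arg (f x / c x : Circle)) / (2 * π),
    hcont.div_const _⟩, fun x => ?_, fun x => ?_⟩
  · dsimp only [ContinuousMap.coe_mk]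
    rw [abs_div, abs_of_pos two_pi_pos, div_lt_iff₀ two_pi_pos]
    calc |arg (c x) + arg (f x / c x : Circle)|
        ≤ |arg (c x)| + |arg (f x / c x : Circle)| := abs_add_le _ _
      _ < π + π / 3 := add_lt_add_of_le_of_lt (abs_arg_le_pi _)
          (Circle.abs_arg_lt_pi_div_three (hdist x))
      _ = 2 / 3 * (2 * π) := by ring
  · dsimp only [ContinuousMap.coe_mk]
    rw [mul_div_cancel₀ _ two_pi_pos.ne', Circle.exp_add,
      Circle.exp_arg, Circle.exp_arg, mul_div_cancel (c x)]

theorem statement14_general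
    {M : Type*} [TopologicalSpace M] [CompactSpace M]
    -- `M` is zero-dimensional: the clopen sets form a topological basis
    (hzerodim : TopologicalSpace.IsTopologicalBasis { s : Set M | IsClopen s }) :
    (∀ f : C(M, Circle), ∃ g : C(M, ℝ),
        (∀ x : M, |g x| < 2 / 3) ∧ ∀ x : M, f x = Circle.exp (2 * Real.pi * g x)) ∧
      Function.Surjective (cExp (M := M)) := by
  have hlog := ContinuousMap.exists_abs_lt_two_div_three_and_eq_circleExp hzerodim
  refine ⟨hlog, fun f => ?_⟩
  obtain ⟨g, -, hg⟩ := hlog f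
  exact ⟨g, ContinuousMap.ext fun x => (hg x).symm⟩

/-- For a compact, second countable, zero-dimensional space `M`, every continuous function
`f : M → 𝕋` has a continuous logarithm `g : M → ℝ` bounded by `2/3`; in particular, the
exponential homomorphism `C(M, ℝ) → C(M, 𝕋)` is surjective. -/
theorem statement14
    {M : Type*} [TopologicalSpace M] [CompactSpace M] [T2Space M] [SecondCountableTopology M]
    -- `M` is zero-dimensional: the clopen sets form a topological basis
    (hzerodim : TopologicalSpace.IsTopologicalBasis { s : Set M | IsClopen s }) :
    (∀ f : C(M, Circle), ∃ g : C(M, ℝ),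
        (∀ x : M, |g x| < 2 / 3) ∧ ∀ x : M, f x = Circle.exp (2 * Real.pi * g x)) ∧
      Function.Surjective (cExp (M := M)) :=
  statement14_general hzerodim

end
end

section
/- Let M be a compact, second countable, zero-dimensional space. Then the group C(M,T) of continuous functions from M to the circle group T, with pointwise multiplication and the topology of uniform convergence, is connected. -/
/-!
Every `f : C(M, 𝕋)` is of the form `exp ∘ g` with `g : C(M, ℝ)`; as `C(M, ℝ)` is connected and
`g ↦ exp ∘ g` is continuous, `C(M, 𝕋)` is connected. To lift `f`, use compactness and the clopen
basis to find a locally constant `c` with `|f - c| < 1` everywhere. Then `f / c` stays away from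
`-1`, so `arg ∘ (f / c)` is continuous, while `arg ∘ c` is locally constant, hence continuous, and
`f = exp (arg ∘ (f / c) + arg ∘ c)`.
-/

open Complex Set TopologicalSpace

lemma IsLocallyConstant.piecewise {X Y : Type*} [TopologicalSpace X] {s : Set X}
    [∀ x, Decidable (x ∈ s)] (hs : IsClopen s) {f g : X → Y} (hf : IsLocallyConstant f)
    (hg : IsLocallyConstant g) : IsLocallyConstant (s.piecewise f g) := by
  rw [IsLocallyConstant.iff_eventually_eq]
  intro x
  by_cases hx : x ∈ s
  · filter_upwards [hs.isOpen.mem_nhds hx, hf.eventually_eq x] with y hy hfy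
    simp [hx, hy, hfy]
  · filter_upwards [hs.compl.isOpen.mem_nhds hx, hg.eventually_eq x] with y hy hgy
    simp_all

namespace Circle

lemma dist_eq (a b : Circle) : dist a b = ‖(a : ℂ) - b‖ :=
  (Subtype.dist_eq a b).trans (dist_eq_norm _ _)

lemma coe_mem_slitPlane_of_dist_one_lt {z : Circle} (hz : dist z 1 < 1) :
    (z : ℂ) ∈ slitPlane := by
  rw [dist_eq, coe_one] at hz
  simpa using mem_slitPlane_of_norm_lt_one hz

lemma dist_mul_inv_one (a b : Circle) : dist (a * b⁻¹) 1 = dist a b := by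
  have hb : (b : ℂ) ≠ 0 := coe_ne_zero b
  have : (a : ℂ) * (b : ℂ)⁻¹ - 1 = ((a : ℂ) - b) / b := by field_simp
  rw [dist_eq, dist_eq, coe_mul, coe_inv, coe_one, this, norm_div, norm_coe, div_one]

end Circle

namespace ContinuousMap

variable {X : Type*} [TopologicalSpace X]

lemma exists_isLocallyConstant_forall_dist_lt [CompactSpace X]
    (hX : IsTopologicalBasis {s : Set X | IsClopen s}) {Y : Type*} [PseudoMetricSpace Y]
    (f : C(X, Y)) {ε : ℝ} (hε : 0 < ε) :
    ∃ c : X → Y, IsLocallyConstant c ∧ ∀ x, dist (f x) (c x) < ε := by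
  classical
  rcases isEmpty_or_nonempty X with _ | ⟨⟨x₀⟩⟩
  · exact ⟨f, .of_constant _ fun x => isEmptyElim x, isEmptyElim⟩
  have hU : ∀ x, ∃ U, IsClopen U ∧ x ∈ U ∧ U ⊆ f ⁻¹' Metric.ball (f x) ε := fun x =>
    hX.exists_subset_of_mem_open (by simpa using hε) (Metric.isOpen_ball.preimage f.continuous)
  choose U hU hxU hUf using hU
  obtain ⟨t, ht⟩ := isCompact_univ.elim_finite_subcover U (fun x => (hU x).isOpen)
    fun x _ => mem_iUnion.2 ⟨x, hxU x⟩
  suffices ∀ s : Finset X, ∃ c : X → Y, IsLocallyConstant c ∧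
      ∀ y ∈ ⋃ x ∈ s, U x, dist (f y) (c y) < ε by
    obtain ⟨c, hc, hfc⟩ := this t
    exact ⟨c, hc, fun y => hfc y (ht (mem_univ y))⟩
  intro s
  induction s using Finset.induction_on with
  | empty => exact ⟨fun _ => f x₀, .const _, by simp⟩
  | insert x s _ ih =>
    obtain ⟨c, hc, hfc⟩ := ih
    refine ⟨(U x).piecewise (fun _ => f x) c, IsLocallyConstant.piecewise (hU x) (.const _) hc,
      fun y hy => ?_⟩
    by_cases hyx : y ∈ U x
    · simpa [hyx] using hUf x hyx
    · simp only [Finset.set_biUnion_insert, mem_union, hyx, false_or] at hy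
      simpa [hyx] using hfc y hy

lemma exists_circleExp_comp_eq_of_dist_one_lt (f : C(X, Circle)) (hf : ∀ x, dist (f x) 1 < 1) :
    ∃ g : C(X, ℝ), Circle.exp.comp g = f := by
  have hcont : Continuous fun x => arg (f x) :=
    continuousOn_arg.comp_continuous (continuous_subtype_val.comp f.continuous)
      fun x => Circle.coe_mem_slitPlane_of_dist_one_lt (hf x)
  exact ⟨⟨fun x => arg (f x), hcont⟩, ext fun x => Circle.exp_arg (f x)⟩

lemma exists_circleExp_comp_eq_of_isLocallyConstant (f : C(X, Circle))
    (hf : IsLocallyConstant f) : ∃ g : C(X, ℝ), Circle.exp.comp g = f :=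
  ⟨⟨fun x => arg (f x), (hf.comp fun z : Circle => arg z).continuous⟩,
    ext fun x => Circle.exp_arg (f x)⟩

lemma exists_circleExp_comp_eq_mul {f₁ f₂ : C(X, Circle)}
    (h₁ : ∃ g : C(X, ℝ), Circle.exp.comp g = f₁) (h₂ : ∃ g : C(X, ℝ), Circle.exp.comp g = f₂) :
    ∃ g : C(X, ℝ), Circle.exp.comp g = f₁ * f₂ := by
  obtain ⟨g₁, rfl⟩ := h₁
  obtain ⟨g₂, rfl⟩ := h₂
  exact ⟨g₁ + g₂, ext fun x => Circle.exp_add (g₁ x) (g₂ x)⟩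

lemma circleExp_comp_surjective [CompactSpace X]
    (hX : IsTopologicalBasis {s : Set X | IsClopen s}) :
    Function.Surjective (Circle.exp.comp : C(X, ℝ) → C(X, Circle)) := by
  intro f
  obtain ⟨c, hc, hfc⟩ := exists_isLocallyConstant_forall_dist_lt hX f one_pos
  let c' : C(X, Circle) := ⟨c, hc.continuous⟩
  have hf : f = f * c'⁻¹ * c' := by simp
  rw [hf]
  refine exists_circleExp_comp_eq_mul (exists_circleExp_comp_eq_of_dist_one_lt _ fun x => ?_)
    (exists_circleExp_comp_eq_of_isLocallyConstant c' hc)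
  simpa [c', Circle.dist_mul_inv_one] using hfc x

end ContinuousMap

theorem statement15_general
    {M : Type*} [TopologicalSpace M] [CompactSpace M]
    -- `M` is zero-dimensional: the clopen sets form a topological basis
    (hzerodim : TopologicalSpace.IsTopologicalBasis { s : Set M | IsClopen s }) :
    ConnectedSpace C(M, Circle) :=
  (ContinuousMap.circleExp_comp_surjective hzerodim).connectedSpace
    (ContinuousMap.continuous_postcomp Circle.exp)

/-- For a compact, second countable, zero-dimensional space `M`, the group `C(M, 𝕋)` of
continuous functions from `M` to the circle group, with pointwise multiplication and the
topology of uniform convergence, is connected. -/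
theorem statement15
    {M : Type*} [TopologicalSpace M] [CompactSpace M] [T2Space M] [SecondCountableTopology M]
    -- `M` is zero-dimensional: the clopen sets form a topological basis
    (hzerodim : TopologicalSpace.IsTopologicalBasis { s : Set M | IsClopen s }) :
    ConnectedSpace C(M, Circle) :=
  statement15_general hzerodim
end
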